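/- A cancellative semigroup that embeds in a nilpotent group of class n is Malcev nilpotent of class at most n. In particular, every nilpotent group of class n, viewed as a semigroup, is Malcev nilpotent of class n. -/

import Mathlib

/-- The Malcev sequences: `(malcevLR x y z n).1 = λ_n`, `(malcevLR x y z n).2 = ρ_n`,
with `λ_0 = x`, `ρ_0 = y`, `λ_{k+1} = λ_k z_k ρ_k`, `ρ_{k+1} = ρ_k z_k λ_k`. -/
def malcevLR {α : Type*} [Mul α] (x y : α) (z : ℕ → α) : ℕ → α × α
  | 0 => (x, y)
  | n+1 => ((malcevLR x y z n).1 * z n * (malcevLR x y z n).2,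
            (malcevLR x y z n).2 * z n * (malcevLR x y z n).1)

/-- A semigroup is Malcev nilpotent of class at most `n` if `λ_n = ρ_n` identically,
with the interlacing elements taken from `S¹ = WithOne S`. -/
def MalcevClassLe (S : Type*) [Semigroup S] (n : ℕ) : Prop :=
  ∀ (a b : S) (c : ℕ → WithOne S),
    (malcevLR (a : WithOne S) (b : WithOne S) c n).1 =
    (malcevLR (a : WithOne S) (b : WithOne S) c n).2

/-- Malcev nilpotency. -/
def MalcevNilpotent (S : Type*) [Semigroup S] : Prop :=
  ∃ n, 1 ≤ n ∧ MalcevClassLe S n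

/-- A (two-sided, nonempty) ideal of a semigroup. -/
def IsIdeal {S : Type*} [Mul S] (I : Set S) : Prop :=
  I.Nonempty ∧ ∀ s x, x ∈ I → s * x ∈ I ∧ x * s ∈ I

/-- The Rees congruence associated to an ideal: identify all elements of `I`. -/
def reesCon {S : Type*} [Semigroup S] (I : Set S) (hI : IsIdeal I) : Con S where
  r x y := x = y ∨ (x ∈ I ∧ y ∈ I)
  iseqv := ⟨fun _ => Or.inl rfl,
    fun h => h.elim (fun h => Or.inl h.symm) (fun h => Or.inr ⟨h.2, h.1⟩),
    fun h₁ h₂ => by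
      rcases h₁ with h₁ | h₁
      · rwa [h₁]
      · rcases h₂ with h₂ | h₂
        · exact Or.inr ⟨h₁.1, h₂ ▸ h₁.2⟩
        · exact Or.inr ⟨h₁.1, h₂.2⟩⟩
  mul' := by
    intro a b c d h₁ h₂
    rcases h₁ with h₁ | h₁
    · rcases h₂ with h₂ | h₂
      · exact Or.inl (by rw [h₁, h₂])
      · exact Or.inr ⟨(hI.2 a c h₂.1).1, h₁ ▸ (hI.2 b d h₂.2).1⟩
    · exact Or.inr ⟨(hI.2 c a h₁.1).2, (hI.2 d b h₁.2).2⟩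

/-- `S` is minimal non-nilpotent: not Malcev nilpotent, but every proper subsemigroup and
every proper Rees factor semigroup is Malcev nilpotent. -/
def MinimalNonNilpotent (S : Type*) [Semigroup S] : Prop :=
  ¬ MalcevNilpotent S ∧
  (∀ T : Subsemigroup S, T ≠ ⊤ → MalcevNilpotent T) ∧
  (∀ (I : Set S) (hI : IsIdeal I), I.Nontrivial →
    MalcevNilpotent (reesCon I hI).Quotient)

/-- `θ` together with the injective family `E g i j ↔ (g; i, j)` realizes a copy of the
inverse Rees matrix semigroup `M⁰(G, n, n; I_n)` as an ideal of `S`. -/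
def IsReesIdeal {S : Type*} [Semigroup S] {G : Type*} [Group G] {n : ℕ}
    (θ : S) (E : G → Fin n → Fin n → S) : Prop :=
  (∀ s : S, s * θ = θ ∧ θ * s = θ) ∧
  Function.Injective (fun p : G × Fin n × Fin n => E p.1 p.2.1 p.2.2) ∧
  (θ ∉ Set.range fun p : G × Fin n × Fin n => E p.1 p.2.1 p.2.2) ∧
  (∀ g h i j k l, E g i j * E h k l = if j = k then E (g * h) i l else θ) ∧
  (∀ (s : S) g i j,
    (s * E g i j = θ ∨ ∃ g' i' j', s * E g i j = E g' i' j') ∧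
    (E g i j * s = θ ∨ ∃ g' i' j', E g i j * s = E g' i' j'))

/-- The underlying set of the Rees ideal `M = E(G × n × n) ∪ {θ}`. -/
def reesIdealSet {S : Type*} {G : Type*} {n : ℕ} (θ : S) (E : G → Fin n → Fin n → S) :
    Set S :=
  (Set.range fun p : G × Fin n × Fin n => E p.1 p.2.1 p.2.2) ∪ {θ}

/-! For groups the Malcev identity at level `m` is equivalent to `γ_{m+1}(G) = 1`: the quotient
`λ_{k+1} ρ_{k+1}⁻¹` is the commutator `⁅λ_k ρ_k⁻¹, ρ_k c_k⁆`, so `λ_k ρ_k⁻¹` lies in the `k`-th term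
of the lower central series; conversely, choosing `c_m = ρ_m⁻¹ g` shows that the identity at
level `m + 1` forces every `λ_m ρ_m⁻¹` to be central, and one inducts through `G ⧸ Z(G)`.
A semigroup `S` embedded in `G` inherits the identity, because the Malcev words of elements of `S`
interlaced with elements of `S¹` are again elements of `S`. -/

def MalcevIdentity (M : Type*) [Mul M] (m : ℕ) : Prop :=
  ∀ (a b : M) (c : ℕ → M), (malcevLR a b c m).1 = (malcevLR a b c m).2

section Mul

variable {α β : Type*} [Mul α] [Mul β]

lemma malcevLR_map {F : Type*} [FunLike F α β] [MulHomClass F α β] (f : F) (x y : α)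
    (z : ℕ → α) (k : ℕ) :
    malcevLR (f x) (f y) (f ∘ z) k = Prod.map f f (malcevLR x y z k) := by
  induction k with
  | zero => rfl
  | succ k ih => simp [malcevLR, ih]

lemma malcevLR_congr (x y : α) {z z' : ℕ → α} {k : ℕ} (h : ∀ i < k, z i = z' i) :
    malcevLR x y z k = malcevLR x y z' k := by
  induction k with
  | zero => rfl
  | succ k ih =>
    simp only [malcevLR, ih fun i hi => h i (Nat.lt_succ_of_lt hi), h k k.lt_succ_self]

end Mul

lemma WithOne.exists_coe_mul_mul_coe {S : Type*} [Semigroup S] (x y : S) (w : WithOne S) :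
    ∃ s : S, (x : WithOne S) * w * y = s :=
  WithOne.cases_on w ⟨x * y, by rw [mul_one, WithOne.coe_mul]⟩
    fun w => ⟨x * w * y, by rw [WithOne.coe_mul, WithOne.coe_mul]⟩

lemma malcevLR_coe_eq {S : Type*} [Semigroup S] (a b : S) (c : ℕ → WithOne S) (k : ℕ) :
    ∃ x y : S, malcevLR (a : WithOne S) b c k = ((x : WithOne S), (y : WithOne S)) := by
  induction k with
  | zero => exact ⟨a, b, rfl⟩
  | succ k ih =>
    obtain ⟨x, y, hxy⟩ := ih
    obtain ⟨s, hs⟩ := WithOne.exists_coe_mul_mul_coe x y (c k)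
    obtain ⟨t, ht⟩ := WithOne.exists_coe_mul_mul_coe y x (c k)
    exact ⟨s, t, by simp only [malcevLR, hxy, hs, ht]⟩

lemma malcevClassLe_of_injective {S M : Type*} [Semigroup S] [Monoid M] {n : ℕ}
    (f : S →ₙ* M) (hf : Function.Injective f) (h : MalcevIdentity M n) : MalcevClassLe S n := by
  intro a b c
  obtain ⟨x, y, hxy⟩ := malcevLR_coe_eq a b c n
  have hφ := h (WithOne.lift f a) (WithOne.lift f b) (WithOne.lift f ∘ c)
  rw [malcevLR_map, hxy] at hφ
  have hfxy : f x = f y := by simpa only [Prod.map_apply, WithOne.lift_coe] using hφ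
  rw [hxy, hf hfxy]

lemma malcevIdentity_of_malcevClassLe {S : Type*} [Semigroup S] {n : ℕ}
    (h : MalcevClassLe S n) : MalcevIdentity S n := by
  intro a b c
  have hcoe := h a b (WithOne.coeMulHom ∘ c)
  rw [← WithOne.coeMulHom_apply a, ← WithOne.coeMulHom_apply b, malcevLR_map] at hcoe
  exact WithOne.coe_inj.mp hcoe

lemma malcevClassLe_iff_malcevIdentity {M : Type*} [Monoid M] {n : ℕ} :
    MalcevClassLe M n ↔ MalcevIdentity M n :=
  ⟨malcevIdentity_of_malcevClassLe,
    malcevClassLe_of_injective (MulHom.id M) Function.injective_id⟩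

section Group

open Subgroup (center)
open scoped commutatorElement

variable {G : Type*} [Group G]

lemma malcevLR_succ_fst_mul_inv_snd (a b : G) (c : ℕ → G) (k : ℕ) :
    (malcevLR a b c (k + 1)).1 * (malcevLR a b c (k + 1)).2⁻¹ =
      ⁅(malcevLR a b c k).1 * (malcevLR a b c k).2⁻¹, (malcevLR a b c k).2 * c k⁆ := by
  simp only [malcevLR, commutatorElement_def]
  group

lemma malcevLR_fst_mul_inv_snd_mem_lowerCentralSeries (a b : G) (c : ℕ → G) (k : ℕ) :
    (malcevLR a b c k).1 * (malcevLR a b c k).2⁻¹ ∈ (⊤ : Subgroup G).lowerCentralSeries k := by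
  induction k with
  | zero => exact Subgroup.mem_top _
  | succ k ih =>
    rw [malcevLR_succ_fst_mul_inv_snd, Subgroup.lowerCentralSeries_succ]
    exact Subgroup.commutator_mem_commutator ih (Subgroup.mem_top _)

lemma malcevLR_fst_mul_inv_snd_mem_center {m : ℕ} (h : MalcevIdentity G (m + 1))
    (a b : G) (c : ℕ → G) : (malcevLR a b c m).1 * (malcevLR a b c m).2⁻¹ ∈ center G := by
  rw [Subgroup.mem_center_iff]
  intro g
  set l := (malcevLR a b c m).1
  set r := (malcevLR a b c m).2
  have hlevel : malcevLR a b (Function.update c m (r⁻¹ * g)) m = malcevLR a b c m :=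
    malcevLR_congr a b fun i hi => Function.update_of_ne hi.ne _ _
  have hid : l * (r⁻¹ * g) * r = r * (r⁻¹ * g) * l := by
    simpa only [malcevLR, hlevel, Function.update_self] using
      h a b (Function.update c m (r⁻¹ * g))
  calc g * (l * r⁻¹) = r * (r⁻¹ * g) * l * r⁻¹ := by group
    _ = l * (r⁻¹ * g) * r * r⁻¹ := by rw [hid]
    _ = l * r⁻¹ * g := by group

lemma malcevIdentity_quotient_center {m : ℕ} (h : MalcevIdentity G (m + 1)) :
    MalcevIdentity (G ⧸ center G) m := by
  intro a' b' c'
  obtain ⟨a, rfl⟩ := QuotientGroup.mk'_surjective (center G) a'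
  obtain ⟨b, rfl⟩ := QuotientGroup.mk'_surjective (center G) b'
  obtain ⟨c, rfl⟩ : ∃ c, QuotientGroup.mk' (center G) ∘ c = c' :=
    ⟨fun i => (QuotientGroup.mk'_surjective _ (c' i)).choose,
      funext fun i => (QuotientGroup.mk'_surjective _ (c' i)).choose_spec⟩
  rw [malcevLR_map, Prod.map_fst, Prod.map_snd, ← mul_inv_eq_one, ← map_inv, ← map_mul,
    ← MonoidHom.mem_ker, QuotientGroup.ker_mk']
  exact malcevLR_fst_mul_inv_snd_mem_center h a b c

lemma lowerCentralSeries_succ_eq_bot_of_quotient_center {m : ℕ}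
    (h : (⊤ : Subgroup (G ⧸ center G)).lowerCentralSeries m = ⊥) :
    (⊤ : Subgroup G).lowerCentralSeries (m + 1) = ⊥ := by
  refine Subgroup.lowerCentralSeries_succ_eq_bot ⊤ ?_
  rw [← QuotientGroup.ker_mk' (center G), ← Subgroup.map_eq_bot_iff,
    Subgroup.map_lowerCentralSeries,
    Subgroup.map_top_of_surjective _ (QuotientGroup.mk'_surjective _), h]

lemma lowerCentralSeries_eq_bot_of_malcevIdentity {m : ℕ} (h : MalcevIdentity G m) :
    (⊤ : Subgroup G).lowerCentralSeries m = ⊥ := by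
  induction m generalizing G with
  | zero => exact (Subgroup.eq_bot_iff_forall _).mpr fun x _ => h x 1 fun _ => 1
  | succ m ih =>
    exact lowerCentralSeries_succ_eq_bot_of_quotient_center (ih (malcevIdentity_quotient_center h))

lemma malcevIdentity_iff_lowerCentralSeries_eq_bot {m : ℕ} :
    MalcevIdentity G m ↔ (⊤ : Subgroup G).lowerCentralSeries m = ⊥ := by
  refine ⟨lowerCentralSeries_eq_bot_of_malcevIdentity, fun h a b c => ?_⟩
  have hmem := malcevLR_fst_mul_inv_snd_mem_lowerCentralSeries a b c m
  rwa [h, Subgroup.mem_bot, mul_inv_eq_one] at hmem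

lemma malcevIdentity_iff_nilpotencyClass_le [Group.IsNilpotent G] {m : ℕ} :
    MalcevIdentity G m ↔ Group.nilpotencyClass G ≤ m :=
  malcevIdentity_iff_lowerCentralSeries_eq_bot.trans
    Subgroup.lowerCentralSeries_eq_bot_iff_nilpotencyClass_le

end Group

theorem stmt_4_general {S : Type*} [Semigroup S] {G : Type*} [Group G]
    [Group.IsNilpotent G] (n : ℕ) (hG : Group.nilpotencyClass G = n)
    (f : S →ₙ* G) (hf : Function.Injective f) :
    MalcevClassLe S n ∧
      ∀ (H : Type*) [Group H] [Group.IsNilpotent H], Group.nilpotencyClass H = n →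
        MalcevClassLe H n ∧ ∀ m < n, ¬ MalcevClassLe H m := by
  refine ⟨malcevClassLe_of_injective f hf (malcevIdentity_iff_nilpotencyClass_le.mpr hG.le),
    fun H _ _ hH => ⟨malcevClassLe_iff_malcevIdentity.mpr
      (malcevIdentity_iff_nilpotencyClass_le.mpr hH.le), fun m hm hmal => ?_⟩⟩
  have hle := malcevIdentity_iff_nilpotencyClass_le.mp (malcevClassLe_iff_malcevIdentity.mp hmal)
  omega

/-- A cancellative semigroup embedding in a nilpotent group of class `n` is Malcev nilpotent
of class at most `n`; in particular a nilpotent group of class `n` is Malcev nilpotent of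
class exactly `n`. -/
theorem stmt_4 {S : Type*} [Semigroup S] [IsCancelMul S] {G : Type*} [Group G]
    [Group.IsNilpotent G] (n : ℕ) (hG : Group.nilpotencyClass G = n)
    (f : S →ₙ* G) (hf : Function.Injective f) :
    MalcevClassLe S n ∧
      ∀ (H : Type*) [Group H] [Group.IsNilpotent H], Group.nilpotencyClass H = n →
        MalcevClassLe H n ∧ ∀ m < n, ¬ MalcevClassLe H m :=
  stmt_4_general n hG f hf
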